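/- arXiv:1412.5900 — 7 statements merged into one kernel-verified Lean document; each statement's English description precedes it below -/
import Mathlib

section
/- Let X be a complex Banach space, L : X → X a continuous linear operator, and v₁, v₂ ∈ X linearly independent vectors with Lv₁ = v₁ and Lv₂ = v₂. Let φ₁, φ₂ : X → ℂ be continuous linear functionals with φ₁(v₁) = −1, φ₂(v₂) = −1, φ₁(v₂) = 0, φ₂(v₁) = 0. Define M : X → X by Mh = Lh + φ₁(h)·v₁ + φ₂(h)·v₂. Then: (a) Mv₁ = 0 and Mv₂ = 0; (b) if h is nonzero with Lh = κh for some κ ∉ {0, 1}, then h + (φ₁(h)/κ)v₁ + (φ₂(h)/κ)v₂ is nonzero and is mapped by M to κ times itself; (c) if h is nonzero with Mh = κh for some κ ∉ {0, 1}, then h − (φ₁(h)/(κ−1))v₁ − (φ₂(h)/(κ−1))v₂ is nonzero and is mapped by L to κ times itself. (This is the abstract spectral content of the lemma comparing the spectra of the renormalization operator with fixed scalings and the EKW renormalization operator: their spectra coincide except for the eigenvalue 1 of the former.) -/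
/-- Abstract spectral content of the lemma comparing the spectra of the
renormalization operator with fixed scalings and the EKW renormalization operator:
`M h = L h + φ₁(h) • v₁ + φ₂(h) • v₂` kills the two coordinate-change eigenvectors
`v₁, v₂` of eigenvalue `1`, and otherwise `L` and `M` have the same eigenvalues
`κ ∉ {0, 1}`, with explicit correspondence of eigenvectors. -/
theorem spectra_coincide_except_eigenvalue_one
    (X : Type*) [NormedAddCommGroup X] [NormedSpace ℂ X] [CompleteSpace X]
    (L : X →L[ℂ] X) (v₁ v₂ : X) (hind : LinearIndependent ℂ ![v₁, v₂])
    (hv₁ : L v₁ = v₁) (hv₂ : L v₂ = v₂)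
    (φ₁ φ₂ : X →L[ℂ] ℂ)
    (hφ₁v₁ : φ₁ v₁ = -1) (hφ₂v₂ : φ₂ v₂ = -1)
    (hφ₁v₂ : φ₁ v₂ = 0) (hφ₂v₁ : φ₂ v₁ = 0)
    (M : X → X) (hM : ∀ h : X, M h = L h + φ₁ h • v₁ + φ₂ h • v₂) :
    (M v₁ = 0 ∧ M v₂ = 0) ∧
    (∀ (h : X) (κ : ℂ), h ≠ 0 → L h = κ • h → κ ≠ 0 → κ ≠ 1 →
      h + (φ₁ h / κ) • v₁ + (φ₂ h / κ) • v₂ ≠ 0 ∧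
      M (h + (φ₁ h / κ) • v₁ + (φ₂ h / κ) • v₂)
        = κ • (h + (φ₁ h / κ) • v₁ + (φ₂ h / κ) • v₂)) ∧
    (∀ (h : X) (κ : ℂ), h ≠ 0 → M h = κ • h → κ ≠ 0 → κ ≠ 1 →
      h - (φ₁ h / (κ - 1)) • v₁ - (φ₂ h / (κ - 1)) • v₂ ≠ 0 ∧
      L (h - (φ₁ h / (κ - 1)) • v₁ - (φ₂ h / (κ - 1)) • v₂)
        = κ • (h - (φ₁ h / (κ - 1)) • v₁ - (φ₂ h / (κ - 1)) • v₂)) := by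
  refine ⟨⟨?_, ?_⟩, ?_, ?_⟩
  · rw [hM]; simp [hv₁, hφ₁v₁, hφ₂v₁]
  · rw [hM]; simp [hv₂, hφ₁v₂, hφ₂v₂]
  · intro h κ hh hLh hκ0 hκ1
    set a := φ₁ h with ha
    set b := φ₂ h with hb
    constructor
    · intro hg
      have key₁ : a - a / κ = 0 := by
        have h0 : φ₁ (h + (a/κ) • v₁ + (b/κ) • v₂) = a - a / κ := by
          simp only [map_add, map_smul, hφ₁v₁, hφ₁v₂, ← ha, smul_eq_mul]
          ring
        rw [hg, map_zero] at h0
        exact h0.symm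
      have key₂ : b - b / κ = 0 := by
        have h0 : φ₂ (h + (a/κ) • v₁ + (b/κ) • v₂) = b - b / κ := by
          simp only [map_add, map_smul, hφ₂v₁, hφ₂v₂, ← hb, smul_eq_mul]
          ring
        rw [hg, map_zero] at h0
        exact h0.symm
      have ha0 : a = 0 := by
        have h2 : a * (κ - 1) = 0 :=
          by linear_combination κ * key₁ + div_mul_cancel₀ a hκ0
        rcases mul_eq_zero.mp h2 with h' | h'
        · exact h'
        · exact absurd (sub_eq_zero.mp h') hκ1
      have hb0 : b = 0 := by
        have h2 : b * (κ - 1) = 0 :=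
          by linear_combination κ * key₂ + div_mul_cancel₀ b hκ0
        rcases mul_eq_zero.mp h2 with h' | h'
        · exact h'
        · exact absurd (sub_eq_zero.mp h') hκ1
      rw [ha0, hb0] at hg
      simp at hg
      exact hh hg
    · rw [hM]
      simp only [map_add, map_smul, hLh, hv₁, hv₂, hφ₁v₁, hφ₁v₂, hφ₂v₁, hφ₂v₂,
        smul_eq_mul, ← ha, ← hb]
      match_scalars <;> field_simp <;> ring
  · intro h κ hh hMh hκ0 hκ1
    have hκ1' : κ - 1 ≠ 0 := sub_ne_zero.mpr hκ1
    set a := φ₁ h with ha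
    set b := φ₂ h with hb
    have hLh : L h = κ • h - a • v₁ - b • v₂ := by
      have h0 := (hM h).symm.trans hMh
      rw [← h0]; abel
    constructor
    · intro hg
      have key₁ : a + a / (κ - 1) = 0 := by
        have h0 : φ₁ (h - (a/(κ-1)) • v₁ - (b/(κ-1)) • v₂) = a + a / (κ - 1) := by
          simp only [map_sub, map_smul, hφ₁v₁, hφ₁v₂, ← ha, smul_eq_mul]
          ring
        rw [hg, map_zero] at h0
        exact h0.symm
      have key₂ : b + b / (κ - 1) = 0 := by
        have h0 : φ₂ (h - (a/(κ-1)) • v₁ - (b/(κ-1)) • v₂) = b + b / (κ - 1) := by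
          simp only [map_sub, map_smul, hφ₂v₁, hφ₂v₂, ← hb, smul_eq_mul]
          ring
        rw [hg, map_zero] at h0
        exact h0.symm
      have ha0 : a = 0 := by
        have h2 : a * κ = 0 :=
          by linear_combination (κ - 1) * key₁ - div_mul_cancel₀ a hκ1'
        rcases mul_eq_zero.mp h2 with h' | h'
        · exact h'
        · exact absurd h' hκ0
      have hb0 : b = 0 := by
        have h2 : b * κ = 0 :=
          by linear_combination (κ - 1) * key₂ - div_mul_cancel₀ b hκ1'
        rcases mul_eq_zero.mp h2 with h' | h'
        · exact h'
        · exact absurd h' hκ0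
      rw [ha0, hb0] at hg
      simp at hg
      exact hh hg
    · simp only [map_sub, map_smul, hLh, hv₁, hv₂]
      match_scalars <;> field_simp <;> ring
end

section
/- Let E be a normed vector space over ℂ, Λ : E → E a continuous linear equivalence, σ : E → E a map, and for a map G differentiable at the relevant points set h_{G,σ}(q) := DG(q)(σ(q)) − σ(G(q)). Then: (a) for G differentiable at Λp, the conjugated map Λ⁻¹∘G∘Λ satisfies h_{Λ⁻¹∘G∘Λ, Λ⁻¹∘σ∘Λ}(p) = Λ⁻¹(h_{G,σ}(Λp)); (b) if F : E → E is differentiable, Λ⁻¹∘F∘F∘Λ = F (F is a renormalization fixed point), and there is κ ∈ ℂ with Λ⁻¹(σ(Λq)) = κ·σ(q) for all q, then Λ⁻¹(h_{F∘F,σ}(Λp)) = κ·h_{F,σ}(p) for all p at which the derivatives exist; (c) for E = ℂ², Λ(x,u) = (λx, μu) with λ, μ ≠ 0, and σ(x,u) = (x^{i+1}u^j, 0) with integers i ≥ −1, j ≥ 0, one has Λ⁻¹(σ(Λ(x,u))) = λ^i μ^j σ(x,u), and likewise for σ(x,u) = (0, x^i u^{j+1}) with i ≥ 0, j ≥ −1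 one has Λ⁻¹(σ(Λ(x,u))) = λ^i μ^j σ(x,u). (This shows that coordinate changes generate eigenvectors of the linearized renormalization with eigenvalues λ^i μ^j.) -/
/-- Coordinate changes generate eigenvectors of the linearized renormalization
with eigenvalues `λ^i μ^j`.
(a) For the conjugated map `Λ⁻¹ ∘ G ∘ Λ` and conjugated vector field `Λ⁻¹ ∘ σ ∘ Λ`,
the coordinate-change field `h_{A,τ}(p) = DA(p)(τ(p)) - τ(A(p))` satisfies
`h_{Λ⁻¹∘G∘Λ, Λ⁻¹∘σ∘Λ}(p) = Λ⁻¹(h_{G,σ}(Λp))`.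
(b) If `F` is a renormalization fixed point, `Λ⁻¹∘F∘F∘Λ = F`, and
`Λ⁻¹(σ(Λq)) = κ • σ(q)`, then `Λ⁻¹(h_{F∘F,σ}(Λp)) = κ • h_{F,σ}(p)`.
(c) For `E = ℂ²`, `Λ(x,u) = (λx, μu)` and monomial fields `σ` one has
`Λ⁻¹(σ(Λ(x,u))) = λ^i μ^j σ(x,u)`. -/
theorem coordinate_changes_generate_eigenvectors
    (E : Type*) [NormedAddCommGroup E] [NormedSpace ℂ E]
    (Λ : E ≃L[ℂ] E) (σ : E → E) :
    (∀ (G : E → E) (p : E), DifferentiableAt ℂ G (Λ p) →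
      fderiv ℂ (fun q => Λ.symm (G (Λ q))) p (Λ.symm (σ (Λ p)))
          - Λ.symm (σ (Λ (Λ.symm (G (Λ p)))))
        = Λ.symm (fderiv ℂ G (Λ p) (σ (Λ p)) - σ (G (Λ p)))) ∧
    (∀ (F : E → E), Differentiable ℂ F →
      (∀ q : E, Λ.symm (F (F (Λ q))) = F q) →
      ∀ κ : ℂ, (∀ q : E, Λ.symm (σ (Λ q)) = κ • σ q) →
      ∀ p : E,
        Λ.symm (fderiv ℂ (F ∘ F) (Λ p) (σ (Λ p)) - σ (F (F (Λ p))))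
          = κ • (fderiv ℂ F p (σ p) - σ (F p))) ∧
    (∀ lam mu : ℂ, lam ≠ 0 → mu ≠ 0 →
      (∀ i j : ℤ, -1 ≤ i → 0 ≤ j → ∀ x u : ℂ,
        ((((lam * x) ^ (i + 1) * (mu * u) ^ j) / lam, (0 : ℂ)) : ℂ × ℂ)
          = (lam ^ i * mu ^ j) • ((x ^ (i + 1) * u ^ j, (0 : ℂ)) : ℂ × ℂ)) ∧
      (∀ i j : ℤ, 0 ≤ i → -1 ≤ j → ∀ x u : ℂ,
        (((0 : ℂ), ((lam * x) ^ i * (mu * u) ^ (j + 1)) / mu) : ℂ × ℂ)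
          = (lam ^ i * mu ^ j) • (((0 : ℂ), x ^ i * u ^ (j + 1)) : ℂ × ℂ))) := by
  have parta : ∀ (G : E → E) (p : E), DifferentiableAt ℂ G (Λ p) →
      fderiv ℂ (fun q => Λ.symm (G (Λ q))) p (Λ.symm (σ (Λ p)))
          - Λ.symm (σ (Λ (Λ.symm (G (Λ p)))))
        = Λ.symm (fderiv ℂ G (Λ p) (σ (Λ p)) - σ (G (Λ p))) := by
    intro G p hG
    have h1 : fderiv ℂ (fun q => Λ.symm (G (Λ q))) p
        = ((Λ.symm : E →L[ℂ] E).comp (fderiv ℂ G (Λ p))).comp (Λ : E →L[ℂ] E) := by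
      have : (fun q => Λ.symm (G (Λ q))) = (Λ.symm ∘ G) ∘ Λ := rfl
      rw [this, Λ.comp_right_fderiv, Λ.symm.comp_fderiv]
    rw [h1]
    simp [map_sub]
  refine ⟨parta, ?_, ?_⟩
  · intro F hF hfix κ hκ p
    have hfix' : ∀ q, F (F (Λ q)) = Λ (F q) := fun q => by
      rw [← hfix q, Λ.apply_symm_apply]
    have hG : DifferentiableAt ℂ (F ∘ F) (Λ p) := (hF _).comp _ (hF _)
    have key := parta (F ∘ F) p hG
    have hfun : (fun q => Λ.symm ((F ∘ F) (Λ q))) = F := by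
      funext q; exact hfix q
    rw [hfun] at key
    simp only [Function.comp_apply] at key
    rw [← key, hκ, map_smul, hfix p, hκ (F p), smul_sub]
  · intro lam mu hlam hmu
    constructor
    · intro i j hi hj x u
      have h1 : (lam * x) ^ (i + 1) = lam ^ (i + 1) * x ^ (i + 1) := mul_zpow _ _ _
      have h2 : (mu * u) ^ j = mu ^ j * u ^ j := mul_zpow _ _ _
      have h3 : lam ^ (i + 1) = lam ^ i * lam := zpow_add_one₀ hlam i
      ext <;> simp [h1, h2, h3, smul_eq_mul]
      · field_simp
    · intro i j hi hj x u
      have h1 : (lam * x) ^ i = lam ^ i * x ^ i := mul_zpow _ _ _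
      have h2 : (mu * u) ^ (j + 1) = mu ^ (j + 1) * u ^ (j + 1) := mul_zpow _ _ _
      have h3 : mu ^ (j + 1) = mu ^ j * mu := zpow_add_one₀ hmu j
      ext <;> simp [h1, h2, h3, smul_eq_mul]
      · field_simp
end

section
/- Let s : U → ℂ be continuously differentiable on an open set U ⊆ ℂ², with partial derivatives s₁ = ∂₁s, s₂ = ∂₂s. Let V ⊆ ℂ² be open and y : V → ℂ differentiable with s(y(x,u), x) = −u for all (x,u) ∈ V, where (y(x,u), x) ∈ U and (x, y(x,u)) ∈ U, and suppose s₁(y(x,u), x) ≠ 0 on V. Define F : V → ℂ² by F(x,u) = (y(x,u), s(x, y(x,u))). Then F is differentiable and its derivative DF(x,u) is the linear map sending (1,0) to (−s₂(y,x)/s₁(y,x), s₁(x,y) − s₂(x,y)·s₂(y,x)/s₁(y,x)) and sending (0,1) to (−1/s₁(y,x), −s₂(x,y)/s₁(y,x)), where y = y(x,u). Moreover, if in addition s₁(a,b) = s₁(b,a) for all (a,b) with (a,b), (b,a) ∈ U, then det DF(x,u) = 1 for all (x,u) ∈ V, i.e. the twist map F generated by a generating function with symmetric first partial derivative is area-preserving.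 -/
/-!
Differentiating `s (y (x, u), x) = -u` by the chain rule gives `s₁(y,x) dy + s₂(y,x) dx = -du`,
which determines both partials of `y` because `s₁(y,x) ≠ 0`; the chain rule once more gives the
derivative of the second component `s (x, y)`. The Jacobian determinant then collapses to
`s₁(x,y) / s₁(y,x)`, which is `1` when `s₁` is symmetric.
-/

open Filter Topology

variable {𝕜 : Type*} [NontriviallyNormedField 𝕜]

theorem ContinuousLinearMap.apply_pair {R M : Type*} [Semiring R] [TopologicalSpace R]
    [AddCommMonoid M] [TopologicalSpace M] [Module R M] (T : R × R →L[R] M) (a b : R) :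
    T (a, b) = a • T (1, 0) + b • T (0, 1) := by
  rw [← map_smul, ← map_smul, ← map_add]
  simp

theorem HasFDerivAt.implicit_relation {s y : 𝕜 × 𝕜 → 𝕜} {D : 𝕜 × 𝕜 →L[𝕜] 𝕜}
    {L : 𝕜 × 𝕜 →L[𝕜] 𝕜} {p : 𝕜 × 𝕜} (hs : HasFDerivAt s D (y p, p.1))
    (hy : HasFDerivAt y L p) (heq : ∀ᶠ q in 𝓝 p, s (y q, q.1) = -q.2) (v : 𝕜 × 𝕜) :
    D (L v, v.1) = -v.2 := by
  have hcomp : HasFDerivAt (fun q ↦ s (y q, q.1)) (D.comp (L.prod (.fst 𝕜 𝕜 𝕜))) p :=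
    hs.comp p (hy.prodMk hasFDerivAt_fst)
  have hneg : HasFDerivAt (fun q ↦ s (y q, q.1)) (-(.snd 𝕜 𝕜 𝕜)) p :=
    hasFDerivAt_snd.neg.congr_of_eventuallyEq heq
  simpa using congrArg (· v) (hcomp.unique hneg)

theorem HasFDerivAt.implicit_partials {s y : 𝕜 × 𝕜 → 𝕜} {D : 𝕜 × 𝕜 →L[𝕜] 𝕜}
    {L : 𝕜 × 𝕜 →L[𝕜] 𝕜} {p : 𝕜 × 𝕜} (hs : HasFDerivAt s D (y p, p.1))
    (hy : HasFDerivAt y L p) (heq : ∀ᶠ q in 𝓝 p, s (y q, q.1) = -q.2) (hD : D (1, 0) ≠ 0) :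
    L (1, 0) = -D (0, 1) / D (1, 0) ∧ L (0, 1) = -1 / D (1, 0) := by
  have h₁ := hs.implicit_relation hy heq (1, 0)
  have h₂ := hs.implicit_relation hy heq (0, 1)
  rw [D.apply_pair] at h₁ h₂
  simp only [smul_eq_mul, zero_mul, add_zero, one_mul, neg_zero] at h₁ h₂
  exact ⟨(eq_div_iff hD).2 (by linear_combination h₁),
    (eq_div_iff hD).2 (by linear_combination h₂)⟩

theorem HasFDerivAt.twistMap {s y : 𝕜 × 𝕜 → 𝕜} {D L : 𝕜 × 𝕜 →L[𝕜] 𝕜} {p : 𝕜 × 𝕜}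
    (hs : HasFDerivAt s D (p.1, y p)) (hy : HasFDerivAt y L p) :
    HasFDerivAt (fun q ↦ (y q, s (q.1, y q)))
      (L.prod (D.comp ((ContinuousLinearMap.fst 𝕜 𝕜 𝕜).prod L))) p :=
  hy.prodMk (hs.comp p (hasFDerivAt_fst.prodMk hy))

theorem twistMap_fderiv {s y : 𝕜 × 𝕜 → 𝕜} {p : 𝕜 × 𝕜}
    (hs₀ : DifferentiableAt 𝕜 s (y p, p.1)) (hs : DifferentiableAt 𝕜 s (p.1, y p))
    (hy : DifferentiableAt 𝕜 y p) (heq : ∀ᶠ q in 𝓝 p, s (y q, q.1) = -q.2)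
    (hnz : fderiv 𝕜 s (y p, p.1) (1, 0) ≠ 0) :
    DifferentiableAt 𝕜 (fun q ↦ (y q, s (q.1, y q))) p ∧
      fderiv 𝕜 (fun q ↦ (y q, s (q.1, y q))) p (1, 0)
        = (-fderiv 𝕜 s (y p, p.1) (0, 1) / fderiv 𝕜 s (y p, p.1) (1, 0),
           fderiv 𝕜 s (p.1, y p) (1, 0) - fderiv 𝕜 s (p.1, y p) (0, 1) *
             fderiv 𝕜 s (y p, p.1) (0, 1) / fderiv 𝕜 s (y p, p.1) (1, 0)) ∧
      fderiv 𝕜 (fun q ↦ (y q, s (q.1, y q))) p (0, 1)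
        = (-1 / fderiv 𝕜 s (y p, p.1) (1, 0),
           -fderiv 𝕜 s (p.1, y p) (0, 1) / fderiv 𝕜 s (y p, p.1) (1, 0)) := by
  have hF := hs.hasFDerivAt.twistMap hy.hasFDerivAt
  obtain ⟨h₁, h₂⟩ := hs₀.hasFDerivAt.implicit_partials hy.hasFDerivAt heq hnz
  have hDF (v : 𝕜 × 𝕜) : fderiv 𝕜 (fun q ↦ (y q, s (q.1, y q))) p v
      = (fderiv 𝕜 y p v, fderiv 𝕜 s (p.1, y p) (v.1, fderiv 𝕜 y p v)) := by
    rw [hF.fderiv]; rfl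
  refine ⟨hF.differentiableAt, ?_, ?_⟩
  · rw [hDF, (fderiv 𝕜 s (p.1, y p)).apply_pair 1, h₁]
    refine Prod.ext rfl ?_
    simp only [smul_eq_mul]
    ring
  · rw [hDF, (fderiv 𝕜 s (p.1, y p)).apply_pair 0, h₂]
    refine Prod.ext rfl ?_
    simp only [smul_eq_mul]
    ring

/-- The derivative of the twist map `F(x,u) = (y(x,u), s(x, y(x,u)))` generated by a
generating function `s` (where `s(y(x,u), x) = -u`) is given by the explicit matrix
in terms of the partial derivatives `s₁, s₂` of `s`; moreover, if `s₁` is symmetric,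
then `det DF = 1`, i.e. `F` is area-preserving. -/
theorem twist_map_derivative_and_area_preservation
    (U V : Set (ℂ × ℂ)) (hU : IsOpen U) (hV : IsOpen V)
    (s : ℂ × ℂ → ℂ) (hs : ContDiffOn ℂ 1 s U)
    (y : ℂ × ℂ → ℂ) (hy : DifferentiableOn ℂ y V)
    (hmem1 : ∀ p ∈ V, (y p, p.1) ∈ U) (hmem2 : ∀ p ∈ V, (p.1, y p) ∈ U)
    (heq : ∀ p ∈ V, s (y p, p.1) = -p.2)
    (s₁ s₂ : ℂ × ℂ → ℂ)
    (hs₁ : ∀ q ∈ U, s₁ q = fderiv ℂ s q (1, 0))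
    (hs₂ : ∀ q ∈ U, s₂ q = fderiv ℂ s q (0, 1))
    (hnz : ∀ p ∈ V, s₁ (y p, p.1) ≠ 0)
    (F : ℂ × ℂ → ℂ × ℂ) (hF : ∀ p : ℂ × ℂ, F p = (y p, s (p.1, y p))) :
    (∀ p ∈ V, DifferentiableAt ℂ F p ∧
      fderiv ℂ F p (1, 0)
        = (-(s₂ (y p, p.1)) / s₁ (y p, p.1),
           s₁ (p.1, y p) - s₂ (p.1, y p) * s₂ (y p, p.1) / s₁ (y p, p.1)) ∧
      fderiv ℂ F p (0, 1)
        = (-1 / s₁ (y p, p.1), -(s₂ (p.1, y p)) / s₁ (y p, p.1))) ∧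
    ((∀ a b : ℂ, (a, b) ∈ U → (b, a) ∈ U → s₁ (a, b) = s₁ (b, a)) →
      ∀ p ∈ V,
        (fderiv ℂ F p (1, 0)).1 * (fderiv ℂ F p (0, 1)).2
          - (fderiv ℂ F p (1, 0)).2 * (fderiv ℂ F p (0, 1)).1 = 1) := by
  obtain rfl : F = fun q ↦ (y q, s (q.1, y q)) := funext hF
  have hsd : DifferentiableOn ℂ s U := hs.differentiableOn one_ne_zero
  refine (and_iff_left_of_imp fun hderiv hsym p hp ↦ ?_).2 fun p hp ↦ ?_
  · obtain ⟨-, h₁, h₂⟩ := hderiv p hp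
    rw [h₁, h₂, hsym _ _ (hmem2 p hp) (hmem1 p hp)]
    have hnz' := hnz p hp
    field_simp
    ring
  · have hq₁ := hmem1 p hp
    have hq₂ := hmem2 p hp
    have hnz' := hnz p hp
    rw [hs₁ _ hq₁] at hnz' ⊢
    rw [hs₂ _ hq₁, hs₁ _ hq₂, hs₂ _ hq₂]
    exact twistMap_fderiv (hsd.differentiableAt (hU.mem_nhds hq₁))
      (hsd.differentiableAt (hU.mem_nhds hq₂)) (hy.differentiableAt (hV.mem_nhds hp))
      (eventually_of_mem (hV.mem_nhds hp) heq) hnz'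
end

section
/- Let s be a function of two variables, λ ∈ ℂ, x, y, z ∈ ℂ, and let F be a map satisfying the generating-function relation F(a, −s(b,a)) = (b, s(a,b)) for the two pairs (a,b) = (λx, z) and (a,b) = (z, λy). If z satisfies the midpoint equation s(λx, z) + s(λy, z) = 0, then F(F(λx, −s(z, λx))) = (λy, s(z, λy)). Consequently, if z = z(x,y) solves the midpoint equation for all (x,y) in a domain, the second iterate F∘F conjugated by the diagonal scaling Λ(x,u) = (λx, μu) maps (x, −μ⁻¹ s(z(x,y), λx)) to (y, μ⁻¹ s(z(x,y), λy)); i.e., the renormalization Λ⁻¹∘F∘F∘Λ is generated by the function s̃(x,y) = μ⁻¹ s(z(x,y), λy). -/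
/-!
Two steps of the twist map pass through the intermediate point `z`: the first step lands at
`(z, s(λx, z))`, and the midpoint equation turns this momentum into `-s(λy, z)`, which is
exactly the point the second step starts from. Conjugating by the diagonal scaling `Λ` only
rescales both ends of this orbit segment.
-/

theorem twist_map_iterate_two_of_midpoint {α β : Type*} [AddGroup β] {s : α × α → β}
    {F : α × β → α × β} {a b z : α} (h₁ : F (a, -s (z, a)) = (z, s (a, z)))
    (h₂ : F (z, -s (b, z)) = (b, s (z, b))) (hmid : s (a, z) + s (b, z) = 0) :
    F (F (a, -s (z, a))) = (b, s (z, b)) := by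
  rw [h₁, eq_neg_of_add_eq_zero_left hmid, h₂]

theorem diag_scaling_conj_apply {K : Type*} [Field K] {lam mu : K} (hlam : lam ≠ 0)
    (hmu : mu ≠ 0) {G Λ Λinv : K × K → K × K} (hΛ : ∀ p : K × K, Λ p = (lam * p.1, mu * p.2))
    (hΛinv : ∀ p : K × K, Λinv p = (p.1 / lam, p.2 / mu)) {x u y v : K}
    (hG : G (lam * x, mu * u) = (lam * y, mu * v)) :
    Λinv (G (Λ (x, u))) = (y, v) := by
  rw [hΛ, hG, hΛinv, mul_div_cancel_left₀ y hlam, mul_div_cancel_left₀ v hmu]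

/-- If `z` solves the midpoint equation `s(λx, z) + s(λy, z) = 0`, then the second
iterate of the twist map `F` generated by `s` maps `(λx, -s(z, λx))` to
`(λy, s(z, λy))`; consequently the renormalization `Λ⁻¹ ∘ F ∘ F ∘ Λ`, with
`Λ(x,u) = (λx, μu)`, maps `(x, -μ⁻¹ s(z, λx))` to `(y, μ⁻¹ s(z, λy))`, i.e. it is
generated by `s̃(x,y) = μ⁻¹ s(z(x,y), λy)`. -/
theorem renormalized_map_generating_function
    (s : ℂ × ℂ → ℂ) (lam mu : ℂ) (hlam : lam ≠ 0) (hmu : mu ≠ 0)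
    (x y z : ℂ) (F : ℂ × ℂ → ℂ × ℂ)
    (h₁ : F (lam * x, -s (z, lam * x)) = (z, s (lam * x, z)))
    (h₂ : F (z, -s (lam * y, z)) = (lam * y, s (z, lam * y)))
    (hmid : s (lam * x, z) + s (lam * y, z) = 0) :
    F (F (lam * x, -s (z, lam * x))) = (lam * y, s (z, lam * y)) ∧
    ∀ Λ Λinv : ℂ × ℂ → ℂ × ℂ,
      (∀ p : ℂ × ℂ, Λ p = (lam * p.1, mu * p.2)) →
      (∀ p : ℂ × ℂ, Λinv p = (p.1 / lam, p.2 / mu)) →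
      Λinv (F (F (Λ (x, -(mu⁻¹ * s (z, lam * x))))))
        = (y, mu⁻¹ * s (z, lam * y)) := by
  have hFF := twist_map_iterate_two_of_midpoint h₁ h₂ hmid
  refine ⟨hFF, fun Λ Λinv hΛ hΛinv => diag_scaling_conj_apply (G := F ∘ F) hlam hmu hΛ hΛinv ?_⟩
  rwa [mul_neg, mul_inv_cancel_left₀ hmu, mul_inv_cancel_left₀ hmu]
end

section
/- Let s be a function of two variables, t ∈ ℂ, and x, y ∈ ℂ with 1 + 2tx ≠ 0 and 1 + 2ty ≠ 0. Define the coordinate change S_t(a,u) = (a + t a², u/(1 + 2ta)) and the function ŝ(a,b) = (1 + 2tb)·s(a + t a², b + t b²). If F is a map satisfying the generating-function relation F(x + tx², −s(y + ty², x + tx²)) = (y + ty², s(x + tx², y + ty²)), then F(S_t(x, −ŝ(y,x))) = S_t(y, ŝ(x,y)). That is, the conjugated map S_t⁻¹∘F∘S_t is the twist map generated by the function ŝ(x,y) = s(x + t x², y + t y²)(1 + 2ty). -/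
/-- The conjugation `S_t⁻¹ ∘ F ∘ S_t` of a twist map `F` generated by `s` by the
coordinate change `S_t(x,u) = (x + t x², u/(1 + 2tx))` is the twist map generated by
`ŝ(x,y) = s(x + t x², y + t y²)(1 + 2ty)`: `F(S_t(x, -ŝ(y,x))) = S_t(y, ŝ(x,y))`. -/
theorem conjugated_map_generating_function
    (s : ℂ × ℂ → ℂ) (t x y : ℂ)
    (hx : 1 + 2 * t * x ≠ 0) (hy : 1 + 2 * t * y ≠ 0)
    (St : ℂ × ℂ → ℂ × ℂ)
    (hSt : ∀ p : ℂ × ℂ, St p = (p.1 + t * p.1 ^ 2, p.2 / (1 + 2 * t * p.1)))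
    (shat : ℂ × ℂ → ℂ)
    (hshat : ∀ p : ℂ × ℂ,
      shat p = (1 + 2 * t * p.2) * s (p.1 + t * p.1 ^ 2, p.2 + t * p.2 ^ 2))
    (F : ℂ × ℂ → ℂ × ℂ)
    (hF : F (x + t * x ^ 2, -s (y + t * y ^ 2, x + t * x ^ 2))
        = (y + t * y ^ 2, s (x + t * x ^ 2, y + t * y ^ 2))) :
    F (St (x, -shat (y, x))) = St (y, shat (x, y)) := by
  simp only [hSt, hshat]
  rw [neg_div, mul_div_cancel_left₀ _ hx, hF, mul_div_cancel_left₀ _ hy]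
end

section
/- Let s : U → ℂ be continuously differentiable on an open set U ⊆ ℂ², V ⊆ ℂ² open, Z : V → ℂ differentiable solving the midpoint equation s(x, Z(x,y)) + s(y, Z(x,y)) = 0 on V, with all points (x, Z(x,y)), (y, Z(x,y)), (Z(x,y), y) in U and with s₂(x, Z(x,y)) + s₂(y, Z(x,y)) ≠ 0 on V. Define ψ_w(x,y) = ∂₁w(x,y)x² + ∂₂w(x,y)y² + 2w(x,y)y for differentiable w, the prerenormalization P(x,y) := s(Z(x,y), y), and δZ(x,y) := −(ψ_s(x, Z(x,y)) + ψ_s(y, Z(x,y)))/(s₂(x, Z(x,y)) + s₂(y, Z(x,y))). Then for all (x,y) ∈ V: s₁(Z(x,y), y)·δZ(x,y) + ψ_s(Z(x,y), y) = ψ_P(x,y). (That is, the directional derivative of the prerenormalization operator at s in the direction ψ_s equals ψ evaluated at the prerenormalization of s.) -/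
/-!
Write `D = s₂(x, Z) + s₂(y, Z)`. Differentiating the midpoint equation along `(1, 0)` and
`(0, 1)` gives `s₁(x, Z) + D·∂₁Z = 0` and `s₁(y, Z) + D·∂₂Z = 0`; substituting these and the
equation itself into `ψ_s(x, Z) + ψ_s(y, Z)` yields `δZ = ∂₁Z·x² + ∂₂Z·y² - Z²`. By the chain
rule `ψ_P = s₁(Z, y)·(∂₁Z·x² + ∂₂Z·y²) + s₂(Z, y)·y² + 2 s(Z, y)·y`, and the term `-Z²` of
`δZ` is cancelled by the term `s₁(Z, y)·Z²` of `ψ_s(Z, y)`.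
-/

namespace Renormalization

variable {𝕜 : Type*} [NontriviallyNormedField 𝕜]

theorem _root_.ContinuousLinearMap.apply_pair_s10 (T : 𝕜 × 𝕜 →L[𝕜] 𝕜) (x z : 𝕜) :
    T (x, z) = x * T (1, 0) + z * T (0, 1) := by
  have hxz : (x, z) = x • ((1 : 𝕜), (0 : 𝕜)) + z • ((0 : 𝕜), (1 : 𝕜)) := by simp
  rw [hxz, map_add, map_smul, map_smul, smul_eq_mul, smul_eq_mul]

theorem fderiv_comp_prodMk_apply {E : Type*} [NormedAddCommGroup E] [NormedSpace 𝕜 E]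
    {s : 𝕜 × 𝕜 → 𝕜} {a b : E → 𝕜} {p : E} (hs : DifferentiableAt 𝕜 s (a p, b p))
    (ha : DifferentiableAt 𝕜 a p) (hb : DifferentiableAt 𝕜 b p) (v : E) :
    fderiv 𝕜 (fun q ↦ s (a q, b q)) p v
      = fderiv 𝕜 s (a p, b p) (1, 0) * fderiv 𝕜 a p v
        + fderiv 𝕜 s (a p, b p) (0, 1) * fderiv 𝕜 b p v := by
  rw [show (fun q ↦ s (a q, b q)) = s ∘ fun q ↦ (a q, b q) from rfl,
    fderiv_comp p hs (ha.prodMk hb), ha.fderiv_prodMk hb]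
  simp only [ContinuousLinearMap.comp_apply, ContinuousLinearMap.prod_apply]
  rw [ContinuousLinearMap.apply_pair_s10]
  ring

theorem fderiv_midpoint_apply {s Z : 𝕜 × 𝕜 → 𝕜} {V : Set (𝕜 × 𝕜)} {p : 𝕜 × 𝕜}
    (hV : V ∈ nhds p) (hmid : ∀ q ∈ V, s (q.1, Z q) + s (q.2, Z q) = 0)
    (hZ : DifferentiableAt 𝕜 Z p) (hs₁ : DifferentiableAt 𝕜 s (p.1, Z p))
    (hs₂ : DifferentiableAt 𝕜 s (p.2, Z p)) (v : 𝕜 × 𝕜) :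
    fderiv 𝕜 s (p.1, Z p) (1, 0) * v.1 + fderiv 𝕜 s (p.2, Z p) (1, 0) * v.2
      + (fderiv 𝕜 s (p.1, Z p) (0, 1) + fderiv 𝕜 s (p.2, Z p) (0, 1)) * fderiv 𝕜 Z p v
      = 0 := by
  have h₀ : HasFDerivAt (fun q ↦ s (q.1, Z q) + s (q.2, Z q)) (0 : 𝕜 × 𝕜 →L[𝕜] 𝕜) p :=
    (hasFDerivAt_const 0 p).congr_of_eventuallyEq (Filter.eventually_of_mem hV hmid)
  have h₁ : DifferentiableAt 𝕜 (fun q ↦ s (q.1, Z q)) p :=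
    hs₁.comp p (differentiableAt_fst.prodMk hZ)
  have h₂ : DifferentiableAt 𝕜 (fun q ↦ s (q.2, Z q)) p :=
    hs₂.comp p (differentiableAt_snd.prodMk hZ)
  have hv := congrArg (· v) ((h₁.hasFDerivAt.add h₂.hasFDerivAt).unique h₀)
  simp only [add_apply, zero_apply,
    fderiv_comp_prodMk_apply hs₁ differentiableAt_fst hZ,
    fderiv_comp_prodMk_apply hs₂ differentiableAt_snd hZ, fderiv_fst, fderiv_snd,
    ContinuousLinearMap.coe_fst', ContinuousLinearMap.coe_snd'] at hv
  linear_combination hv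

noncomputable def psi (w : 𝕜 × 𝕜 → 𝕜) (q : 𝕜 × 𝕜) : 𝕜 :=
  fderiv 𝕜 w q (1, 0) * q.1 ^ 2 + fderiv 𝕜 w q (0, 1) * q.2 ^ 2 + 2 * w q * q.2

theorem neg_psi_add_psi_div_eq {s Z : 𝕜 × 𝕜 → 𝕜} {V : Set (𝕜 × 𝕜)} {p : 𝕜 × 𝕜}
    (hV : V ∈ nhds p) (hmid : ∀ q ∈ V, s (q.1, Z q) + s (q.2, Z q) = 0)
    (hZ : DifferentiableAt 𝕜 Z p) (hs₁ : DifferentiableAt 𝕜 s (p.1, Z p))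
    (hs₂ : DifferentiableAt 𝕜 s (p.2, Z p))
    (hnz : fderiv 𝕜 s (p.1, Z p) (0, 1) + fderiv 𝕜 s (p.2, Z p) (0, 1) ≠ 0) :
    -(psi s (p.1, Z p) + psi s (p.2, Z p))
        / (fderiv 𝕜 s (p.1, Z p) (0, 1) + fderiv 𝕜 s (p.2, Z p) (0, 1))
      = fderiv 𝕜 Z p (1, 0) * p.1 ^ 2 + fderiv 𝕜 Z p (0, 1) * p.2 ^ 2 - Z p ^ 2 := by
  have hx := fderiv_midpoint_apply hV hmid hZ hs₁ hs₂ (1, 0)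
  have hy := fderiv_midpoint_apply hV hmid hZ hs₁ hs₂ (0, 1)
  rw [div_eq_iff hnz, psi, psi]
  linear_combination (-p.1 ^ 2) * hx + (-p.2 ^ 2) * hy + (-2 * Z p) * hmid p (mem_of_mem_nhds hV)

theorem psi_comp_prodMk_snd {s Z : 𝕜 × 𝕜 → 𝕜} {p : 𝕜 × 𝕜}
    (hs : DifferentiableAt 𝕜 s (Z p, p.2)) (hZ : DifferentiableAt 𝕜 Z p) :
    psi (fun q ↦ s (Z q, q.2)) p
      = fderiv 𝕜 s (Z p, p.2) (1, 0)
            * (fderiv 𝕜 Z p (1, 0) * p.1 ^ 2 + fderiv 𝕜 Z p (0, 1) * p.2 ^ 2)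
        + fderiv 𝕜 s (Z p, p.2) (0, 1) * p.2 ^ 2 + 2 * s (Z p, p.2) * p.2 := by
  simp only [psi, fderiv_comp_prodMk_apply hs hZ differentiableAt_snd, fderiv_snd,
    ContinuousLinearMap.coe_snd']
  ring

end Renormalization

open Renormalization in
/-- The directional derivative of the prerenormalization operator
`P(x,y) = s(Z(x,y), y)` at `s` in the direction `ψ_s` equals `ψ` evaluated at the
prerenormalization of `s`:
`s₁(Z,y)·δZ + ψ_s(Z,y) = ψ_P(x,y)`, where `Z` solves the midpoint equation,
`ψ_w(x,y) = ∂₁w·x² + ∂₂w·y² + 2wy` and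
`δZ = -(ψ_s(x,Z) + ψ_s(y,Z))/(s₂(x,Z) + s₂(y,Z))`. -/
theorem prerenormalization_derivative_in_direction_psi
    (U V : Set (ℂ × ℂ)) (hU : IsOpen U) (hV : IsOpen V)
    (s : ℂ × ℂ → ℂ) (hs : ContDiffOn ℂ 1 s U)
    (Z : ℂ × ℂ → ℂ) (hZ : DifferentiableOn ℂ Z V)
    (hm1 : ∀ p ∈ V, (p.1, Z p) ∈ U) (hm2 : ∀ p ∈ V, (p.2, Z p) ∈ U)
    (hm3 : ∀ p ∈ V, ((Z p, p.2) : ℂ × ℂ) ∈ U)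
    (hmid : ∀ p ∈ V, s (p.1, Z p) + s (p.2, Z p) = 0)
    (s₁ s₂ : ℂ × ℂ → ℂ)
    (hs₁ : ∀ q ∈ U, s₁ q = fderiv ℂ s q (1, 0))
    (hs₂ : ∀ q ∈ U, s₂ q = fderiv ℂ s q (0, 1))
    (hnz : ∀ p ∈ V, s₂ (p.1, Z p) + s₂ (p.2, Z p) ≠ 0)
    (ψs : ℂ × ℂ → ℂ)
    (hψs : ∀ q ∈ U, ψs q = s₁ q * q.1 ^ 2 + s₂ q * q.2 ^ 2 + 2 * s q * q.2)
    (P : ℂ × ℂ → ℂ) (hP : ∀ p : ℂ × ℂ, P p = s (Z p, p.2))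
    (δZ : ℂ × ℂ → ℂ)
    (hδZ : ∀ p ∈ V, δZ p
        = -(ψs (p.1, Z p) + ψs (p.2, Z p)) / (s₂ (p.1, Z p) + s₂ (p.2, Z p))) :
    ∀ p ∈ V,
      s₁ (Z p, p.2) * δZ p + ψs (Z p, p.2)
        = fderiv ℂ P p (1, 0) * p.1 ^ 2 + fderiv ℂ P p (0, 1) * p.2 ^ 2
          + 2 * P p * p.2 := by
  intro p hp
  have hsd : ∀ q ∈ U, DifferentiableAt ℂ s q := fun q hq ↦
    (hs.differentiableOn one_ne_zero q hq).differentiableAt (hU.mem_nhds hq)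
  have hψs_eq : ∀ q ∈ U, ψs q = psi s q := fun q hq ↦ by rw [hψs q hq, hs₁ q hq, hs₂ q hq, psi]
  have hZp : DifferentiableAt ℂ Z p := (hZ p hp).differentiableAt (hV.mem_nhds hp)
  have hD : fderiv ℂ s (p.1, Z p) (0, 1) + fderiv ℂ s (p.2, Z p) (0, 1) ≠ 0 := by
    simpa only [hs₂ _ (hm1 p hp), hs₂ _ (hm2 p hp)] using hnz p hp
  have hδZ_eq :
      δZ p = fderiv ℂ Z p (1, 0) * p.1 ^ 2 + fderiv ℂ Z p (0, 1) * p.2 ^ 2 - Z p ^ 2 := by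
    rw [hδZ p hp, hψs_eq _ (hm1 p hp), hψs_eq _ (hm2 p hp), hs₂ _ (hm1 p hp), hs₂ _ (hm2 p hp)]
    exact neg_psi_add_psi_div_eq (hV.mem_nhds hp) hmid hZp (hsd _ (hm1 p hp)) (hsd _ (hm2 p hp)) hD
  rw [← psi, funext hP, psi_comp_prodMk_snd (hsd _ (hm3 p hp)) hZp, hδZ_eq,
    hψs_eq _ (hm3 p hp), psi, hs₁ _ (hm3 p hp)]
  ring
end

section
/- Let P : U → ℂ be differentiable on an open set U ⊆ ℂ², let λ, μ ∈ ℂ \ {0}, and for a differentiable function w set ψ_w(x,y) = ∂₁w(x,y)x² + ∂₂w(x,y)y² + 2w(x,y)y. Define Q(x,y) := μ⁻¹ P(λx, λy). Then μ⁻¹ ψ_P(λx, λy) = λ·ψ_Q(x,y) wherever defined. Consequently, if s is continuously differentiable, Z solves the midpoint equation s(x,Z(x,y)) + s(y,Z(x,y)) = 0 with s₂(x,Z) + s₂(y,Z) ≠ 0, P(x,y) = s(Z(x,y), y) is the prerenormalization of s, and s satisfies the renormalization fixed point equation s(x,y) = μ⁻¹ P(λx, λy), then μ⁻¹·[s₁(Z,·)δZ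 + ψ_s(Z,·)](λx, λy) = λ·ψ_s(x,y), where δZ(x,y) = −(ψ_s(x,Z(x,y)) + ψ_s(y,Z(x,y)))/(s₂(x,Z(x,y)) + s₂(y,Z(x,y))); i.e., ψ_s is an eigenvector of the linearized renormalization operator at the fixed point with eigenvalue λ. -/
/-!
`ψ_w` is the derivative at `t = 0` of `w_t(x, y) = w(h_t x, h_t y) · h_t'(y)` with
`h_t(x) = x / (1 - t x)`. The midpoint equation is invariant under `s ↦ s_t` (with
`Z_t = h_t⁻¹ ∘ Z ∘ (h_t × h_t)`), prerenormalization commutes with it, and `h_t(λx) = λ h_{λt}(x)`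
turns `ℛ_*[s_t]` into `(ℛ_*[s])_{λt}`; differentiating at a fixed point gives the eigenvalue `λ`.
At first order: the linearized midpoint equation forces `δZ = ∂₁Z·x² + ∂₂Z·y² - Z²`, the variation
of `Z` along the flow, which makes `s₁(Z, y)·δZ + ψ_s(Z, y) = ψ_P`; and `ψ` picks up the factor `λ`
under `w ↦ μ⁻¹ w(λ ·)`.
-/

open Filter Topology

theorem map_pair_eq {R M F : Type*} [Semiring R] [AddCommMonoid M] [Module R M] [FunLike F (R × R) M]
    [LinearMapClass F R (R × R) M] (f : F) (a b : R) :
    f (a, b) = a • f (1, 0) + b • f (0, 1) := by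
  rw [← map_smul, ← map_smul, ← map_add]
  simp

variable {𝕜 : Type*} [NontriviallyNormedField 𝕜]

noncomputable def psi (w : 𝕜 × 𝕜 → 𝕜) (q : 𝕜 × 𝕜) : 𝕜 :=
  fderiv 𝕜 w q (1, 0) * q.1 ^ 2 + fderiv 𝕜 w q (0, 1) * q.2 ^ 2 + 2 * w q * q.2

theorem Filter.EventuallyEq.psi_eq {w w' : 𝕜 × 𝕜 → 𝕜} {q : 𝕜 × 𝕜} (h : w =ᶠ[𝓝 q] w') :
    psi w q = psi w' q := by
  rw [psi, psi, h.fderiv_eq, h.eq_of_nhds]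

theorem psi_rescale (w : 𝕜 × 𝕜 → 𝕜) (c lam : 𝕜) (q : 𝕜 × 𝕜) :
    c * psi w (lam • q) = lam * psi (fun p => c * w (lam • p)) q := by
  have hderiv : fderiv 𝕜 (fun p => c * w (lam • p)) q = (c * lam) • fderiv 𝕜 w (lam • q) := by
    simp only [← smul_eq_mul (a := c)]
    rw [← Pi.smul_def, fderiv_const_smul_field, Pi.smul_apply, fderiv_comp_smul, smul_smul, smul_eq_mul]
  simp only [psi, Prod.smul_fst, smul_eq_mul, Prod.smul_snd, hderiv, smul_apply]
  ring

theorem fderiv_comp_prodMk_apply {E : Type*} [NormedAddCommGroup E] [NormedSpace 𝕜 E]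
    {s : 𝕜 × 𝕜 → 𝕜} {a b : E → 𝕜} {q : E} (hs : DifferentiableAt 𝕜 s (a q, b q))
    (ha : DifferentiableAt 𝕜 a q) (hb : DifferentiableAt 𝕜 b q) (e : E) :
    fderiv 𝕜 (fun v => s (a v, b v)) q e
      = fderiv 𝕜 s (a q, b q) (1, 0) * fderiv 𝕜 a q e
        + fderiv 𝕜 s (a q, b q) (0, 1) * fderiv 𝕜 b q e := by
  have hcomp : HasFDerivAt (fun v => s (a v, b v))
      ((fderiv 𝕜 s (a q, b q)).comp ((fderiv 𝕜 a q).prod (fderiv 𝕜 b q))) q :=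
    hs.hasFDerivAt.comp q (ha.hasFDerivAt.prodMk hb.hasFDerivAt)
  rw [hcomp.fderiv]
  simp only [ContinuousLinearMap.coe_comp, Function.comp_apply, ContinuousLinearMap.prod_apply]
  rw [map_pair_eq, smul_eq_mul, smul_eq_mul, mul_comm (fderiv 𝕜 a q e), mul_comm (fderiv 𝕜 b q e)]

variable {s Z : 𝕜 × 𝕜 → 𝕜} {q : 𝕜 × 𝕜}

theorem linearized_midpoint_eq_zero (hx : DifferentiableAt 𝕜 s (q.1, Z q))
    (hy : DifferentiableAt 𝕜 s (q.2, Z q)) (hZ : DifferentiableAt 𝕜 Z q)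
    (hmid : ∀ᶠ v in 𝓝 q, s (v.1, Z v) + s (v.2, Z v) = 0) (e : 𝕜 × 𝕜) :
    fderiv 𝕜 s (q.1, Z q) (1, 0) * e.1 + fderiv 𝕜 s (q.2, Z q) (1, 0) * e.2
      + (fderiv 𝕜 s (q.1, Z q) (0, 1) + fderiv 𝕜 s (q.2, Z q) (0, 1)) * fderiv 𝕜 Z q e = 0 := by
  have hconst : (fun v => s (v.1, Z v) + s (v.2, Z v)) =ᶠ[𝓝 q] fun _ => 0 := hmid
  have hzero : fderiv 𝕜 (fun v => s (v.1, Z v) + s (v.2, Z v)) q e = 0 := by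
    rw [hconst.fderiv_eq, fderiv_const_apply, zero_apply]
  have hx' : DifferentiableAt 𝕜 (fun v => s (v.1, Z v)) q :=
    hx.comp q (differentiableAt_fst.prodMk hZ)
  have hy' : DifferentiableAt 𝕜 (fun v => s (v.2, Z v)) q :=
    hy.comp q (differentiableAt_snd.prodMk hZ)
  rw [fderiv_fun_add hx' hy', add_apply] at hzero
  rw [fderiv_comp_prodMk_apply hx differentiableAt_fst hZ,
    fderiv_comp_prodMk_apply hy differentiableAt_snd hZ] at hzero
  simp only [fderiv_fst, fderiv_snd, ContinuousLinearMap.coe_fst', ContinuousLinearMap.coe_snd']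
    at hzero
  linear_combination hzero

noncomputable def midpointVariation (s Z : 𝕜 × 𝕜 → 𝕜) (q : 𝕜 × 𝕜) : 𝕜 :=
  -(psi s (q.1, Z q) + psi s (q.2, Z q))
    / (fderiv 𝕜 s (q.1, Z q) (0, 1) + fderiv 𝕜 s (q.2, Z q) (0, 1))

theorem midpointVariation_eq (hx : DifferentiableAt 𝕜 s (q.1, Z q))
    (hy : DifferentiableAt 𝕜 s (q.2, Z q)) (hZ : DifferentiableAt 𝕜 Z q)
    (hmid : ∀ᶠ v in 𝓝 q, s (v.1, Z v) + s (v.2, Z v) = 0)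
    (hden : fderiv 𝕜 s (q.1, Z q) (0, 1) + fderiv 𝕜 s (q.2, Z q) (0, 1) ≠ 0) :
    midpointVariation s Z q
      = fderiv 𝕜 Z q (1, 0) * q.1 ^ 2 + fderiv 𝕜 Z q (0, 1) * q.2 ^ 2 - Z q ^ 2 := by
  have e₁ := linearized_midpoint_eq_zero hx hy hZ hmid (1, 0)
  have e₂ := linearized_midpoint_eq_zero hx hy hZ hmid (0, 1)
  have hval : s (q.1, Z q) + s (q.2, Z q) = 0 := hmid.self_of_nhds
  rw [midpointVariation, div_eq_iff hden, psi, psi]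
  simp only [mul_one, mul_zero, add_zero, zero_add] at e₁ e₂
  linear_combination -(q.1 ^ 2) * e₁ - q.2 ^ 2 * e₂ - 2 * Z q * hval

theorem psi_prerenormalization (hs : DifferentiableAt 𝕜 s (Z q, q.2)) (hZ : DifferentiableAt 𝕜 Z q) :
    psi (fun v => s (Z v, v.2)) q
      = fderiv 𝕜 s (Z q, q.2) (1, 0)
          * (fderiv 𝕜 Z q (1, 0) * q.1 ^ 2 + fderiv 𝕜 Z q (0, 1) * q.2 ^ 2 - Z q ^ 2)
        + psi s (Z q, q.2) := by
  simp only [psi, fderiv_comp_prodMk_apply hs hZ differentiableAt_snd, fderiv_snd,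
    ContinuousLinearMap.coe_snd']
  ring

theorem psi_is_eigenvector_of_linearized_renormalization_general
    (lam mu : ℂ) :
    (∀ (P Q : ℂ × ℂ → ℂ) (x y : ℂ),
      DifferentiableAt ℂ P ((lam * x, lam * y) : ℂ × ℂ) →
      (∀ p : ℂ × ℂ, Q p = mu⁻¹ * P (lam * p.1, lam * p.2)) →
      mu⁻¹ * (fderiv ℂ P ((lam * x, lam * y) : ℂ × ℂ) (1, 0) * (lam * x) ^ 2
            + fderiv ℂ P ((lam * x, lam * y) : ℂ × ℂ) (0, 1) * (lam * y) ^ 2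
            + 2 * P (lam * x, lam * y) * (lam * y))
        = lam * (fderiv ℂ Q ((x, y) : ℂ × ℂ) (1, 0) * x ^ 2
            + fderiv ℂ Q ((x, y) : ℂ × ℂ) (0, 1) * y ^ 2
            + 2 * Q (x, y) * y)) ∧
    (∀ (U V W : Set (ℂ × ℂ)), IsOpen U → IsOpen V → IsOpen W →
      ∀ (s : ℂ × ℂ → ℂ), ContDiffOn ℂ 1 s U →
      ∀ (Z : ℂ × ℂ → ℂ), DifferentiableOn ℂ Z V →
      (∀ p ∈ V, ((p.1, Z p) : ℂ × ℂ) ∈ U) →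
      (∀ p ∈ V, ((p.2, Z p) : ℂ × ℂ) ∈ U) →
      (∀ p ∈ V, ((Z p, p.2) : ℂ × ℂ) ∈ U) →
      (∀ p ∈ V, s (p.1, Z p) + s (p.2, Z p) = 0) →
      ∀ (s₁ s₂ : ℂ × ℂ → ℂ),
      (∀ q ∈ U, s₁ q = fderiv ℂ s q (1, 0)) →
      (∀ q ∈ U, s₂ q = fderiv ℂ s q (0, 1)) →
      (∀ p ∈ V, s₂ (p.1, Z p) + s₂ (p.2, Z p) ≠ 0) →
      ∀ (ψs : ℂ × ℂ → ℂ),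
      (∀ q ∈ U, ψs q = s₁ q * q.1 ^ 2 + s₂ q * q.2 ^ 2 + 2 * s q * q.2) →
      ∀ (δZ : ℂ × ℂ → ℂ),
      (∀ p ∈ V, δZ p
        = -(ψs (p.1, Z p) + ψs (p.2, Z p)) / (s₂ (p.1, Z p) + s₂ (p.2, Z p))) →
      (∀ p ∈ W, p ∈ U ∧ ((lam * p.1, lam * p.2) : ℂ × ℂ) ∈ V) →
      (∀ p ∈ W, s p = mu⁻¹ * s (Z (lam * p.1, lam * p.2), lam * p.2)) →
      ∀ p ∈ W,
        mu⁻¹ * (s₁ (Z (lam * p.1, lam * p.2), lam * p.2)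
                  * δZ (lam * p.1, lam * p.2)
                + ψs (Z (lam * p.1, lam * p.2), lam * p.2))
          = lam * ψs p) := by
  refine ⟨fun P Q x y _ hQ => ?_, ?_⟩
  · obtain rfl : Q = fun p => mu⁻¹ * P (lam • p) := funext hQ
    exact psi_rescale P mu⁻¹ lam (x, y)
  intro U V W hU hV hW s hs Z hZ hxU hyU hZU hmid s₁ s₂ hs₁ hs₂ hden ψs hψ δZ hδ hWin hfix p hp
  obtain ⟨hpU, hqV⟩ := hWin p hp
  set q : ℂ × ℂ := lam • p
  have hsU : ∀ u ∈ U, DifferentiableAt ℂ s u := fun u hu =>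
    (hs.differentiableOn one_ne_zero u hu).differentiableAt (hU.mem_nhds hu)
  have hψs : ∀ u ∈ U, ψs u = psi s u := fun u hu => by rw [hψ u hu, hs₁ u hu, hs₂ u hu]; rfl
  have hZq : DifferentiableAt ℂ Z q := (hZ q hqV).differentiableAt (hV.mem_nhds hqV)
  have hδq : δZ q = fderiv ℂ Z q (1, 0) * q.1 ^ 2 + fderiv ℂ Z q (0, 1) * q.2 ^ 2 - Z q ^ 2 := by
    have hden' := hden q hqV
    rw [hs₂ _ (hxU q hqV), hs₂ _ (hyU q hqV)] at hden'
    rw [hδ q hqV, hψs _ (hxU q hqV), hψs _ (hyU q hqV), hs₂ _ (hxU q hqV), hs₂ _ (hyU q hqV)]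
    exact midpointVariation_eq (hsU _ (hxU q hqV)) (hsU _ (hyU q hqV)) hZq
      (eventually_of_mem (hV.mem_nhds hqV) hmid) hden'
  have hfix_near : (fun v => mu⁻¹ * s (Z (lam • v), (lam • v).2)) =ᶠ[𝓝 p] s :=
    eventually_of_mem (hW.mem_nhds hp) fun v hv => (hfix v hv).symm
  calc mu⁻¹ * (s₁ (Z q, q.2) * δZ q + ψs (Z q, q.2))
      = mu⁻¹ * psi (fun v => s (Z v, v.2)) q := by
        rw [psi_prerenormalization (hsU _ (hZU q hqV)) hZq, hδq, hψs _ (hZU q hqV),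
          hs₁ _ (hZU q hqV)]
    _ = lam * psi (fun v => mu⁻¹ * s (Z (lam • v), (lam • v).2)) p := psi_rescale _ _ _ _
    _ = lam * psi s p := by rw [hfix_near.psi_eq]
    _ = lam * ψs p := by rw [hψs p hpU]

/-- (1) For `Q(x,y) = μ⁻¹ P(λx, λy)` one has `μ⁻¹ ψ_P(λx,λy) = λ·ψ_Q(x,y)`, where
`ψ_w(x,y) = ∂₁w·x² + ∂₂w·y² + 2wy`. (2) Consequently, if `s` satisfies the
renormalization fixed point equation `s(x,y) = μ⁻¹ P(λx,λy)` with
`P(x,y) = s(Z(x,y), y)` the prerenormalization of `s` (`Z` solving the midpoint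
equation), then `ψ_s` is an eigenvector of the linearized renormalization operator
at the fixed point with eigenvalue `λ`:
`μ⁻¹·[s₁(Z,·)δZ + ψ_s(Z,·)](λx,λy) = λ·ψ_s(x,y)`. -/
theorem psi_is_eigenvector_of_linearized_renormalization
    (lam mu : ℂ) (hlam : lam ≠ 0) (hmu : mu ≠ 0) :
    (∀ (P Q : ℂ × ℂ → ℂ) (x y : ℂ),
      DifferentiableAt ℂ P ((lam * x, lam * y) : ℂ × ℂ) →
      (∀ p : ℂ × ℂ, Q p = mu⁻¹ * P (lam * p.1, lam * p.2)) →
      mu⁻¹ * (fderiv ℂ P ((lam * x, lam * y) : ℂ × ℂ) (1, 0) * (lam * x) ^ 2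
            + fderiv ℂ P ((lam * x, lam * y) : ℂ × ℂ) (0, 1) * (lam * y) ^ 2
            + 2 * P (lam * x, lam * y) * (lam * y))
        = lam * (fderiv ℂ Q ((x, y) : ℂ × ℂ) (1, 0) * x ^ 2
            + fderiv ℂ Q ((x, y) : ℂ × ℂ) (0, 1) * y ^ 2
            + 2 * Q (x, y) * y)) ∧
    (∀ (U V W : Set (ℂ × ℂ)), IsOpen U → IsOpen V → IsOpen W →
      ∀ (s : ℂ × ℂ → ℂ), ContDiffOn ℂ 1 s U →
      ∀ (Z : ℂ × ℂ → ℂ), DifferentiableOn ℂ Z V →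
      (∀ p ∈ V, ((p.1, Z p) : ℂ × ℂ) ∈ U) →
      (∀ p ∈ V, ((p.2, Z p) : ℂ × ℂ) ∈ U) →
      (∀ p ∈ V, ((Z p, p.2) : ℂ × ℂ) ∈ U) →
      (∀ p ∈ V, s (p.1, Z p) + s (p.2, Z p) = 0) →
      ∀ (s₁ s₂ : ℂ × ℂ → ℂ),
      (∀ q ∈ U, s₁ q = fderiv ℂ s q (1, 0)) →
      (∀ q ∈ U, s₂ q = fderiv ℂ s q (0, 1)) →
      (∀ p ∈ V, s₂ (p.1, Z p) + s₂ (p.2, Z p) ≠ 0) →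
      ∀ (ψs : ℂ × ℂ → ℂ),
      (∀ q ∈ U, ψs q = s₁ q * q.1 ^ 2 + s₂ q * q.2 ^ 2 + 2 * s q * q.2) →
      ∀ (δZ : ℂ × ℂ → ℂ),
      (∀ p ∈ V, δZ p
        = -(ψs (p.1, Z p) + ψs (p.2, Z p)) / (s₂ (p.1, Z p) + s₂ (p.2, Z p))) →
      (∀ p ∈ W, p ∈ U ∧ ((lam * p.1, lam * p.2) : ℂ × ℂ) ∈ V) →
      (∀ p ∈ W, s p = mu⁻¹ * s (Z (lam * p.1, lam * p.2), lam * p.2)) →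
      ∀ p ∈ W,
        mu⁻¹ * (s₁ (Z (lam * p.1, lam * p.2), lam * p.2)
                  * δZ (lam * p.1, lam * p.2)
                + ψs (Z (lam * p.1, lam * p.2), lam * p.2))
          = lam * ψs p) :=
  psi_is_eigenvector_of_linearized_renormalization_general lam mu
end
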